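/- Let H and K be complex Hilbert spaces, let A be a densely defined closed operator on H with core C_A, and let B be a densely defined closed operator on K with core C_B. Then the algebraic span of elementary tensors ξ ⊗ η with ξ ∈ C_A and η ∈ C_B is a core for the closure of the tensor product operator A ⊗ B on H ⊗ K (i.e., the set is dense in the domain of the closure of A ⊗ B for the graph norm). -/

import Mathlib

/- STATEMENT 2: if C_A is a core for the densely defined closed operator A on H
and C_B is a core for the densely defined closed operator B on K, then the span
of elementary tensors ξ ⊗ η with ξ ∈ C_A, η ∈ C_B is a core for the closure
`C` of the tensor product operator A ⊗ B on the Hilbert space tensor product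
H ⊗ K.  The Hilbert tensor product is axiomatized by its characteristic
inner-product identity and density of elementary tensors; `C` being the closure
of A ⊗ B is expressed by: C is closed, elementary tensors of the domains lie in
Dom C with C(ξ ⊗ η) = Aξ ⊗ Bη, and their span is a core for C. -/

noncomputable section

/-- A realization of the Hilbert space tensor product `H ⊗ K`. -/
structure HilbertTensorProduct (H K T : Type*)
    [NormedAddCommGroup H] [InnerProductSpace ℂ H]
    [NormedAddCommGroup K] [InnerProductSpace ℂ K]
    [NormedAddCommGroup T] [InnerProductSpace ℂ T] where
  tmul : H → K → T
  add_left : ∀ ξ ξ' η, tmul (ξ + ξ') η = tmul ξ η + tmul ξ' η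
  smul_left : ∀ (c : ℂ) ξ η, tmul (c • ξ) η = c • tmul ξ η
  add_right : ∀ ξ η η', tmul ξ (η + η') = tmul ξ η + tmul ξ η'
  smul_right : ∀ (c : ℂ) ξ η, tmul ξ (c • η) = c • tmul ξ η
  inner_tmul : ∀ ξ η ξ' η',
    (inner ℂ (tmul ξ η) (tmul ξ' η') : ℂ) = inner ℂ ξ ξ' * inner ℂ η η'
  dense_span :
    Dense (↑(Submodule.span ℂ {x : T | ∃ ξ η, x = tmul ξ η}) : Set T)

/-- `S` is a core for the closed operator `C`: `S ⊆ Dom C` and `S` is dense in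
`Dom C` for the graph norm `‖x‖ + ‖Cx‖`. -/
def IsCore {E : Type*} [NormedAddCommGroup E] [InnerProductSpace ℂ E]
    (C : E →ₗ.[ℂ] E) (S : Set E) : Prop :=
  S ⊆ C.domain ∧
    ∀ x : C.domain, ∀ ε > 0, ∃ y : C.domain,
      (y : E) ∈ S ∧ ‖(x : E) - (y : E)‖ + ‖C x - C y‖ < ε

/-! The graph of `C` lies in the closure of the graph of `A ⊗ B` restricted to the span of
elementary tensors of the domains, so it suffices to put each `(ξ ⊗ η, Aξ ⊗ Bη)` into the
closure `V` of the graph restricted to the span `D` of core tensors, a closed subspace. As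
`(ξ, Aξ)` and `(η, Bη)` are limits of graph points over the cores and `⊗` is a bounded bilinear
map, `(ξ ⊗ η, Aξ ⊗ Bη)` is a limit of points `(ξ' ⊗ η', Aξ' ⊗ Bη')` of `V` with `ξ' ∈ C_A`,
`η' ∈ C_B`. -/

namespace LinearPMap

variable {R E F : Type*} [CommRing R] [AddCommGroup E] [Module R E] [AddCommGroup F] [Module R F]

def graphMap (f : E →ₗ.[R] F) : f.domain →ₗ[R] E × F :=
  f.domain.subtype.prod f.toFun

@[simp]
theorem graphMap_apply (f : E →ₗ.[R] F) (x : f.domain) : f.graphMap x = ((x : E), f x) :=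
  rfl

theorem comap_span_le_comap_graphMap {f : E →ₗ.[R] F} {S : Set E} {V : Submodule R (E × F)}
    (hS : S ⊆ f.domain) (hV : ∀ x : f.domain, (x : E) ∈ S → f.graphMap x ∈ V) :
    (Submodule.span R S).comap f.domain.subtype ≤ V.comap f.graphMap := by
  have hspan : Submodule.span R S ≤ (V.comap f.graphMap).map f.domain.subtype :=
    Submodule.span_le.2 fun s hs => ⟨⟨s, hS hs⟩, hV ⟨s, hS hs⟩ hs, rfl⟩
  simpa only [Submodule.comap_map_eq_of_injective f.domain.injective_subtype] using
    Submodule.comap_mono (f := f.domain.subtype) hspan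

end LinearPMap

theorem isCore_iff_forall_mem_closure {E : Type*} [NormedAddCommGroup E] [InnerProductSpace ℂ E]
    (C : E →ₗ.[ℂ] E) (S : Set E) :
    IsCore C S ↔
      S ⊆ C.domain ∧ ∀ x : C.domain, C.graphMap x ∈ closure (C.graphMap '' (Subtype.val ⁻¹' S)) := by
  refine and_congr_right fun _ => forall_congr' fun x => ?_
  simp only [Metric.mem_closure_iff, Set.exists_mem_image, Set.mem_preimage,
    LinearPMap.graphMap_apply, Prod.dist_eq]
  simp only [dist_eq_norm]
  constructor
  · intro h ε hε
    obtain ⟨y, hyS, hy⟩ := h ε hε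
    exact ⟨y, hyS, max_lt (by linarith [norm_nonneg (C x - C y)])
      (by linarith [norm_nonneg ((x : E) - y)])⟩
  · intro h ε hε
    obtain ⟨y, hyS, hy⟩ := h (ε / 2) (half_pos hε)
    refine ⟨y, hyS, ?_⟩
    linarith [max_lt_iff.1 hy]

namespace HilbertTensorProduct

variable {H K T : Type*} [NormedAddCommGroup H] [InnerProductSpace ℂ H]
    [NormedAddCommGroup K] [InnerProductSpace ℂ K] [NormedAddCommGroup T] [InnerProductSpace ℂ T]
    (P : HilbertTensorProduct H K T)

theorem norm_tmul (ξ : H) (η : K) : ‖P.tmul ξ η‖ = ‖ξ‖ * ‖η‖ := by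
  have h := P.inner_tmul ξ η ξ η
  simp only [inner_self_eq_norm_sq_to_K] at h
  have hsq : ‖P.tmul ξ η‖ ^ 2 = (‖ξ‖ * ‖η‖) ^ 2 := by
    rw [mul_pow]; exact_mod_cast h
  exact (sq_eq_sq₀ (norm_nonneg _) (by positivity)).1 hsq

theorem isBoundedBilinearMap_tmul : IsBoundedBilinearMap ℂ fun p : H × K => P.tmul p.1 p.2 where
  add_left := P.add_left
  smul_left := P.smul_left
  add_right := P.add_right
  smul_right := P.smul_right
  bound := ⟨1, one_pos, fun ξ η => by rw [P.norm_tmul, one_mul]⟩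

@[fun_prop]
theorem continuous_tmul : Continuous fun p : H × K => P.tmul p.1 p.2 :=
  P.isBoundedBilinearMap_tmul.continuous

theorem tmul_mem_closure_of_isCore {A : H →ₗ.[ℂ] H} {B : K →ₗ.[ℂ] K} {CA : Set H} {CB : Set K}
    (hCA : IsCore A CA) (hCB : IsCore B CB) (ξ : A.domain) (η : B.domain) :
    (P.tmul ξ η, P.tmul (A ξ) (B η)) ∈ closure
      {p : T × T | ∃ ξ' : A.domain, (ξ' : H) ∈ CA ∧ ∃ η' : B.domain, (η' : K) ∈ CB ∧
        p = (P.tmul ξ' η', P.tmul (A ξ') (B η'))} := by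
  have hcont : Continuous fun q : (H × H) × (K × K) =>
      (P.tmul q.1.1 q.2.1, P.tmul q.1.2 q.2.2) := by
    fun_prop
  refine map_mem_closure₂ (f := fun a b => (P.tmul a.1 b.1, P.tmul a.2 b.2)) hcont
    ((isCore_iff_forall_mem_closure A CA).1 hCA |>.2 ξ)
    ((isCore_iff_forall_mem_closure B CB).1 hCB |>.2 η) ?_
  rintro _ ⟨ξ', hξ', rfl⟩ _ ⟨η', hη', rfl⟩
  exact ⟨ξ', hξ', η', hη', rfl⟩

end HilbertTensorProduct

theorem tensorProduct_core_general
    (H K T : Type*)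
    [NormedAddCommGroup H] [InnerProductSpace ℂ H]
    [NormedAddCommGroup K] [InnerProductSpace ℂ K]
    [NormedAddCommGroup T] [InnerProductSpace ℂ T]
    (P : HilbertTensorProduct H K T)
    (A : H →ₗ.[ℂ] H) (B : K →ₗ.[ℂ] K)
    (CA : Set H) (hCA : IsCore A CA)
    (CB : Set K) (hCB : IsCore B CB)
    (C : T →ₗ.[ℂ] T)
    (hdom : ∀ (ξ : A.domain) (η : B.domain), P.tmul ξ η ∈ C.domain)
    (haction : ∀ (ξ : A.domain) (η : B.domain),
      C ⟨P.tmul ξ η, hdom ξ η⟩ = P.tmul (A ξ) (B η))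
    -- `C` is the closure of `A ⊗ B` defined on the span of elementary tensors:
    (hclosure : IsCore C
      ↑(Submodule.span ℂ
        {x : T | ∃ ξ : A.domain, ∃ η : B.domain, x = P.tmul ξ η})) :
    IsCore C
      ↑(Submodule.span ℂ
        {x : T | ∃ ξ ∈ CA, ∃ η ∈ CB, x = P.tmul ξ η}) := by
  set D := Submodule.span ℂ {x : T | ∃ ξ ∈ CA, ∃ η ∈ CB, x = P.tmul ξ η}
  have hD : (D : Set T) ⊆ C.domain := Submodule.span_le.2 <| by
    rintro _ ⟨ξ, hξ, η, hη, rfl⟩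
    exact hdom ⟨ξ, hCA.1 hξ⟩ ⟨η, hCB.1 hη⟩
  set G := {x : T | ∃ ξ : A.domain, ∃ η : B.domain, x = P.tmul ξ η}
  set V := ((D.comap C.domain.subtype).map C.graphMap).topologicalClosure
  have hV : (V : Set (T × T)) = closure (C.graphMap '' (Subtype.val ⁻¹' D)) := by
    simp only [V, Submodule.topologicalClosure_coe, Submodule.map_coe, Submodule.comap_coe,
      Submodule.coe_subtype]
  have hgen : ∀ x : C.domain, (x : T) ∈ G → C.graphMap x ∈ V := by
    rintro x ⟨ξ, η, hx⟩
    obtain rfl : x = ⟨P.tmul ξ η, hdom ξ η⟩ := Subtype.ext hx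
    rw [← SetLike.mem_coe, hV, LinearPMap.graphMap_apply, haction]
    refine closure_mono ?_ (P.tmul_mem_closure_of_isCore hCA hCB ξ η)
    rintro _ ⟨ξ', hξ', η', hη', rfl⟩
    exact ⟨⟨_, hdom ξ' η'⟩, Submodule.subset_span ⟨ξ', hξ', η', hη', rfl⟩,
      by rw [LinearPMap.graphMap_apply, haction]⟩
  have hspan := LinearPMap.comap_span_le_comap_graphMap (Submodule.span_le.1 hclosure.1) hgen
  rw [isCore_iff_forall_mem_closure] at hclosure ⊢
  refine ⟨hD, fun x => ?_⟩
  refine closure_minimal ?_ isClosed_closure (hclosure.2 x)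
  rintro _ ⟨y, hy, rfl⟩
  exact hV ▸ hspan hy

theorem tensorProduct_core
    (H K T : Type*)
    [NormedAddCommGroup H] [InnerProductSpace ℂ H] [CompleteSpace H]
    [NormedAddCommGroup K] [InnerProductSpace ℂ K] [CompleteSpace K]
    [NormedAddCommGroup T] [InnerProductSpace ℂ T] [CompleteSpace T]
    (P : HilbertTensorProduct H K T)
    (A : H →ₗ.[ℂ] H) (B : K →ₗ.[ℂ] K)
    (hA : A.IsClosed) (hAdense : Dense (A.domain : Set H))
    (hB : B.IsClosed) (hBdense : Dense (B.domain : Set K))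
    (CA : Set H) (hCA : IsCore A CA)
    (CB : Set K) (hCB : IsCore B CB)
    (C : T →ₗ.[ℂ] T) (hC : C.IsClosed)
    (hdom : ∀ (ξ : A.domain) (η : B.domain), P.tmul ξ η ∈ C.domain)
    (haction : ∀ (ξ : A.domain) (η : B.domain),
      C ⟨P.tmul ξ η, hdom ξ η⟩ = P.tmul (A ξ) (B η))
    -- `C` is the closure of `A ⊗ B` defined on the span of elementary tensors:
    (hclosure : IsCore C
      ↑(Submodule.span ℂ
        {x : T | ∃ ξ : A.domain, ∃ η : B.domain, x = P.tmul ξ η})) :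
    IsCore C
      ↑(Submodule.span ℂ
        {x : T | ∃ ξ ∈ CA, ∃ η ∈ CB, x = P.tmul ξ η}) :=
  tensorProduct_core_general H K T P A B CA hCA CB hCB C hdom haction hclosure

end
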